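/- arXiv:0810.4571 — 3 statements merged into one kernel-verified Lean document; each statement's English description precedes it below -/
import Mathlib

section
/- Let k be a field of characteristic zero and f ∈ k[[x_{0,1},…,x_{0,N}]] a nonzero power series of order ≥ 1. Then for every m ≥ 0, the jet polynomial F_m satisfies ord F_m = ord f; in particular F_m ≠ 0 for every m. -/
/-!
Statement 11 (Ishii, Lemma `appear` (i), consequence):
Let `k` be a field of characteristic zero and `f ∈ k[[x_{0,1},…,x_{0,N}]]` a
nonzero power series of order ≥ 1.  Then for every `m ≥ 0`,
`ord F_m = ord f`; in particular `F_m ≠ 0`.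
-/


noncomputable section

/-- The weight of an exponent `E : (ℕ × Fin N) →₀ ℕ` (describing the monomial
`∏ x_{i,j}^{E(i,j)}`), where the variable `x_{i,j}` has weight `i`. -/
def jetWeight {N : ℕ} (E : (ℕ × Fin N) →₀ ℕ) : ℕ :=
  E.sum fun p n => p.1 * n

/-- The total degree of an exponent. -/
def expDegree {σ : Type*} (E : σ →₀ ℕ) : ℕ :=
  E.sum fun _ n => n

/-- For `f ∈ k[[x_{0,1},…,x_{0,N}]]` the jet polynomial `F_s`, viewed as an
element of `k[[x_{i,j} : i ∈ ℕ, 1 ≤ j ≤ N]]`; it is obtained by substituting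
`x_{0,j} ↦ ∑ᵢ x_{i,j} tⁱ` in `f` and expanding
`f (∑ᵢ x_{i,1} tⁱ, …, ∑ᵢ x_{i,N} tⁱ) = ∑ₛ F_s tˢ`.  Explicitly, the
coefficient of the monomial `∏ x_{i,j}^{E(i,j)}` in `F_s` vanishes unless the
weight `∑ i·E(i,j)` equals `s`, in which case it equals the multinomial
coefficient `∏_j (∑ᵢ E(i,j))! / ∏ᵢ E(i,j)!` times the coefficient of
`∏_j x_{0,j}^{∑ᵢ E(i,j)}` in `f`. -/
def jetPolynomial {k : Type*} [CommRing k] {N : ℕ}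
    (f : MvPowerSeries (Fin N) k) (s : ℕ) :
    MvPowerSeries (ℕ × Fin N) k :=
  fun E =>
    if jetWeight E = s then
      ((∏ j : Fin N,
        (Finsupp.comapDomain (fun i => (i, j)) E
          (fun a _ b _ h => by simpa using congrArg Prod.fst h)).multinomial : ℕ) : k) *
        MvPowerSeries.coeff (E.mapDomain Prod.snd) f
    else 0

/-- The order of a multivariate power series: the smallest total degree of a
monomial appearing in it (i.e. having nonzero coefficient). -/
def seriesOrder {k : Type*} [CommRing k] {σ : Type*} (f : MvPowerSeries σ k) : ℕ :=
  sInf {n | ∃ d : σ →₀ ℕ, expDegree d = n ∧ MvPowerSeries.coeff d f ≠ 0}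

end

noncomputable section

lemma expDegree_mapDomain {σ τ : Type*} (g : σ → τ) (E : σ →₀ ℕ) :
    expDegree (E.mapDomain g) = expDegree E :=
  Finsupp.sum_mapDomain_index (fun _ => rfl) (fun _ _ _ => rfl)

lemma expDegree_add {σ : Type*} (a b : σ →₀ ℕ) :
    expDegree (a + b) = expDegree a + expDegree b :=
  Finsupp.sum_add_index' (fun _ => rfl) (fun _ _ _ => rfl)

lemma expDegree_single {σ : Type*} (s : σ) (n : ℕ) :
    expDegree (Finsupp.single s n) = n :=
  Finsupp.sum_single_index rfl

lemma jetWeight_add {N : ℕ} (a b : (ℕ × Fin N) →₀ ℕ) :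
    jetWeight (a + b) = jetWeight a + jetWeight b :=
  Finsupp.sum_add_index' (fun _ => mul_zero _) (fun _ _ _ => mul_add _ _ _)

lemma jetWeight_single {N : ℕ} (p : ℕ × Fin N) (n : ℕ) :
    jetWeight (Finsupp.single p n) = p.1 * n :=
  Finsupp.sum_single_index (mul_zero _)

lemma jetWeight_mapDomain_zero {N : ℕ} (D : Fin N →₀ ℕ) :
    jetWeight (D.mapDomain fun j => ((0:ℕ), j)) = 0 := by
  have : jetWeight (D.mapDomain fun j => ((0:ℕ), j))
      = D.sum fun j n => ((0:ℕ), j).1 * n :=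
    Finsupp.sum_mapDomain_index (fun _ => mul_zero _) (fun _ _ _ => mul_add _ _ _)
  simp [this]

/-- **Lemma 4.9 (i), consequence.** -/
theorem jetPolynomial_order_eq
    (k : Type*) [Field k] [CharZero k] (N : ℕ)
    (f : MvPowerSeries (Fin N) k) (hf : f ≠ 0) (hord : 1 ≤ seriesOrder f)
    (m : ℕ) :
    seriesOrder (jetPolynomial f m) = seriesOrder f ∧ jetPolynomial f m ≠ 0 := by
  classical
  have coeff_jet : ∀ E : (ℕ × Fin N) →₀ ℕ,
      MvPowerSeries.coeff E (jetPolynomial f m) =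
      if jetWeight E = m then
        ((∏ j : Fin N, (Finsupp.comapDomain (fun i => (i, j)) E
          (fun a _ b _ h => by simpa using congrArg Prod.fst h)).multinomial : ℕ) : k) *
        MvPowerSeries.coeff (E.mapDomain Prod.snd) f
      else 0 := fun E => rfl
  have key : {n | ∃ d : (ℕ × Fin N) →₀ ℕ, expDegree d = n ∧
        MvPowerSeries.coeff d (jetPolynomial f m) ≠ 0}
      = {n | ∃ d : Fin N →₀ ℕ, expDegree d = n ∧ MvPowerSeries.coeff d f ≠ 0} := by
    ext n
    constructor
    · rintro ⟨E, hEdeg, hE⟩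
      rw [coeff_jet] at hE
      by_cases hw : jetWeight E = m
      · rw [if_pos hw] at hE
        exact ⟨E.mapDomain Prod.snd, by rw [expDegree_mapDomain, hEdeg],
          right_ne_zero_of_mul hE⟩
      · rw [if_neg hw] at hE; exact absurd rfl hE
    · rintro ⟨D, hDdeg, hD⟩
      have hnS : seriesOrder f ≤ n := Nat.sInf_le ⟨D, hDdeg, hD⟩
      have hn1 : 1 ≤ n := le_trans hord hnS
      have hDne : D ≠ 0 := by
        rintro rfl
        simp [expDegree, Finsupp.sum_zero_index] at hDdeg
        omega
      obtain ⟨j₀, hj₀⟩ := Finsupp.support_nonempty_iff.mpr hDne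
      have hj1 : 1 ≤ D j₀ := Nat.one_le_iff_ne_zero.mpr (Finsupp.mem_support_iff.mp hj₀)
      set E : (ℕ × Fin N) →₀ ℕ :=
        ((D.erase j₀).mapDomain fun j => ((0:ℕ), j)) +
          Finsupp.single ((0:ℕ), j₀) (D j₀ - 1) + Finsupp.single (m, j₀) 1 with hE
      have hmap : E.mapDomain Prod.snd = D := by
        rw [hE, Finsupp.mapDomain_add, Finsupp.mapDomain_add,
          Finsupp.mapDomain_single, Finsupp.mapDomain_single,
          ← Finsupp.mapDomain_comp]
        have : (Prod.snd ∘ fun j : Fin N => ((0:ℕ), j)) = id := rfl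
        rw [this, Finsupp.mapDomain_id, add_assoc]
        show Finsupp.erase j₀ D + (Finsupp.single j₀ (D j₀ - 1) + Finsupp.single j₀ 1) = D
        rw [← Finsupp.single_add]
        have : D j₀ - 1 + 1 = D j₀ := by omega
        rw [this, Finsupp.erase_add_single]
      have hweight : jetWeight E = m := by
        rw [hE, jetWeight_add, jetWeight_add, jetWeight_mapDomain_zero,
          jetWeight_single, jetWeight_single]
        simp
      have hdegE : expDegree E = n := by
        have hsplit : expDegree D = expDegree (D.erase j₀) + D j₀ := by
          conv_lhs => rw [← Finsupp.erase_add_single j₀ D]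
          rw [expDegree_add, expDegree_single]
        rw [hE, expDegree_add, expDegree_add, expDegree_mapDomain,
          expDegree_single, expDegree_single]
        omega
      refine ⟨E, hdegE, ?_⟩
      rw [coeff_jet, if_pos hweight, hmap]
      refine mul_ne_zero ?_ hD
      rw [Nat.cast_ne_zero]
      have hpos : 0 < ∏ j : Fin N, (Finsupp.comapDomain (fun i => (i, j)) E
          (fun a _ b _ h => by simpa using congrArg Prod.fst h)).multinomial :=
        Finset.prod_pos fun j _ => by
          rw [Finsupp.multinomial_eq]; exact Nat.multinomial_pos _ _
      exact hpos.ne'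
  constructor
  · unfold seriesOrder
    rw [key]
  · obtain ⟨D, hD⟩ : ∃ d, MvPowerSeries.coeff d f ≠ 0 := by
      by_contra h
      push_neg at h
      exact hf (MvPowerSeries.ext fun d => by rw [h d, map_zero])
    have : expDegree D ∈ {n | ∃ d : (ℕ × Fin N) →₀ ℕ, expDegree d = n ∧
        MvPowerSeries.coeff d (jetPolynomial f m) ≠ 0} := by
      rw [key]; exact ⟨D, rfl, hD⟩
    obtain ⟨E, -, hE⟩ := this
    intro h
    rw [h, map_zero] at hE
    exact hE rfl


end
end

section
/- Let k be a field, N ≥ 1, and let f ∈ k[[x_{0,1},…,x_{0,N}]] be a power series of order ≥ d, where d ≥ 1. Fix m ≥ 0. Then for every s < d(m+1), every monomial appearing in the jet polynomial F_s contains a factor x_{ℓ,j} with ℓ ≤ m; equivalently, substituting x_{ℓ,j} = 0 for all 0 ≤ ℓ ≤ m and all 1 ≤ j ≤ N into F_s yields 0, i.e., F_s lies in the ideal generated by the variables x_{ℓ,j} with 0 ≤ ℓ ≤ m. -/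
noncomputable section

/-- Every monomial of `F_s` for `s < d(m+1)` has a factor `x_{ℓ,j}` with
`ℓ ≤ m`. -/
theorem jetPolynomial_mem_span_low_vars
    (k : Type*) [Field k] (N : ℕ) (hN : 1 ≤ N) (d : ℕ) (hd : 1 ≤ d)
    (f : MvPowerSeries (Fin N) k)
    (hord : ∀ D : Fin N →₀ ℕ, expDegree D < d → MvPowerSeries.coeff D f = 0)
    (m s : ℕ) (hs : s < d * (m + 1)) :
    (∀ E : (ℕ × Fin N) →₀ ℕ, MvPowerSeries.coeff E (jetPolynomial f s) ≠ 0 →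
      ∃ ℓ ≤ m, ∃ j : Fin N, E (ℓ, j) ≠ 0) ∧
    jetPolynomial f s ∈ Ideal.span {g : MvPowerSeries (ℕ × Fin N) k |
      ∃ ℓ ≤ m, ∃ j : Fin N, g = MvPowerSeries.X (ℓ, j)} := by
  classical
  have key : ∀ E : (ℕ × Fin N) →₀ ℕ, MvPowerSeries.coeff E (jetPolynomial f s) ≠ 0 →
      ∃ ℓ ≤ m, ∃ j : Fin N, E (ℓ, j) ≠ 0 := by
    intro E hE
    by_contra hcon
    push_neg at hcon
    rw [MvPowerSeries.coeff_apply] at hE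
    unfold jetPolynomial at hE
    by_cases hw : jetWeight E = s
    · rw [if_pos hw] at hE
      have hf : MvPowerSeries.coeff (E.mapDomain Prod.snd) f ≠ 0 :=
        right_ne_zero_of_mul hE
      have hdeg : d ≤ expDegree (E.mapDomain Prod.snd) := by
        by_contra h; exact hf (hord _ (lt_of_not_ge h))
      have hdegE : expDegree (E.mapDomain Prod.snd) = expDegree E := by
        unfold expDegree
        exact Finsupp.sum_mapDomain_index (fun _ => rfl) (fun _ _ _ => rfl)
      have hsupp : ∀ p ∈ E.support, m + 1 ≤ p.1 := by
        intro p hp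
        by_contra h
        refine Finsupp.mem_support_iff.mp hp ?_
        have := hcon p.1 (Nat.le_of_lt_succ (lt_of_not_ge h)) p.2
        simpa using this
      have hwge : (m + 1) * expDegree E ≤ jetWeight E := by
        unfold jetWeight expDegree Finsupp.sum
        rw [Finset.mul_sum]
        exact Finset.sum_le_sum fun p hp => Nat.mul_le_mul_right _ (hsupp p hp)
      have : d * (m + 1) ≤ s := by
        calc d * (m + 1) = (m + 1) * d := mul_comm _ _
          _ ≤ (m + 1) * expDegree E := Nat.mul_le_mul_left _ (hdegE ▸ hdeg)
          _ ≤ jetWeight E := hwge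
          _ = s := hw
      omega
    · exact hE (if_neg hw)
  refine ⟨key, ?_⟩
  set F := jetPolynomial f s with hF
  set T : Finset (ℕ × Fin N) := (Finset.range (m + 1)) ×ˢ Finset.univ with hT
  set P : ((ℕ × Fin N) →₀ ℕ) → Prop := fun E => ∃ v ∈ T, E v ≠ 0 with hPdef
  have hP : ∀ E, MvPowerSeries.coeff E F ≠ 0 → P E := by
    intro E hE
    obtain ⟨ℓ, hℓ, j, hj⟩ := key E hE
    exact ⟨(ℓ, j), by simp [hT, Finset.mem_product, Nat.lt_succ_of_le hℓ], hj⟩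
  set c : ((ℕ × Fin N) →₀ ℕ) → (ℕ × Fin N) := fun E =>
    if h : P E then h.choose else (0, ⟨0, hN⟩) with hcdef
  have hc : ∀ E, P E → c E ∈ T ∧ E (c E) ≠ 0 := by
    intro E h
    simp only [hcdef, dif_pos h]
    exact ⟨h.choose_spec.1, h.choose_spec.2⟩
  set g : (ℕ × Fin N) → MvPowerSeries (ℕ × Fin N) k := fun v E =>
    if c (E + Finsupp.single v 1) = v then
      MvPowerSeries.coeff (E + Finsupp.single v 1) F else 0 with hg
  have hFsum : F = ∑ v ∈ T, MvPowerSeries.X v * g v := by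
    apply MvPowerSeries.ext
    intro E
    rw [map_sum]
    have hterm : ∀ v, MvPowerSeries.coeff E (MvPowerSeries.X v * g v) =
        if Finsupp.single v 1 ≤ E ∧ c E = v then MvPowerSeries.coeff E F else 0 := by
      intro v
      rw [MvPowerSeries.X_def, MvPowerSeries.coeff_monomial_mul]
      by_cases h1 : Finsupp.single v 1 ≤ E
      · rw [if_pos h1, one_mul, MvPowerSeries.coeff_apply]
        have hEeq : E - Finsupp.single v 1 + Finsupp.single v 1 = E :=
          tsub_add_cancel_of_le h1
        simp only [hg, hEeq]
        by_cases h2 : c E = v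
        · rw [if_pos h2, if_pos ⟨h1, h2⟩]
        · rw [if_neg h2, if_neg (by tauto)]
      · rw [if_neg h1, if_neg (by tauto)]
    simp only [hterm]
    by_cases h0 : MvPowerSeries.coeff E F = 0
    · rw [h0]
      simp
    · have hPE := hP E h0
      obtain ⟨hcT, hcne⟩ := hc E hPE
      have hle : Finsupp.single (c E) 1 ≤ E :=
        Finsupp.single_le_iff.mpr (Nat.one_le_iff_ne_zero.mpr hcne)
      have : ∀ v ∈ T, (if Finsupp.single v 1 ≤ E ∧ c E = v then
          MvPowerSeries.coeff E F else 0) =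
          if c E = v then MvPowerSeries.coeff E F else 0 := by
        intro v _
        by_cases h2 : c E = v
        · rw [if_pos ⟨h2 ▸ hle, h2⟩, if_pos h2]
        · rw [if_neg (by tauto), if_neg h2]
      rw [Finset.sum_congr rfl this, Finset.sum_ite_eq T (c E) fun _ =>
        MvPowerSeries.coeff E F, if_pos hcT]
  rw [hFsum]
  refine Ideal.sum_mem _ fun v hv => ?_
  refine Ideal.mul_mem_right _ _ (Ideal.subset_span ?_)
  refine ⟨v.1, ?_, v.2, by rw [Prod.mk.eta]⟩
  have := (Finset.mem_product.mp hv).1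
  simpa [Nat.lt_succ_iff] using Finset.mem_range.mp this

end
end

section
/- Let A and B be commutative rings and φ : A → B a ring homomorphism making B a flat A-module. Let I ⊆ M be ideals of A and let I' be an ideal of B containing the extension I·B of I. If there exists an element F ∈ I' ∩ (M·B) such that F ∉ M·I' + I·B, then B/I' is not flat as an A/I-module (via the induced ring homomorphism A/I → B/I'). -/
open TensorProduct

/-!
Statement 15 (Ishii, Lemma `notation`):
Let `φ : A → B` make `B` a flat `A`-module, let `I ⊆ M` be ideals of `A` and
`I'` an ideal of `B` containing `I·B`.  If there is `F ∈ I' ∩ M·B` with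
`F ∉ M·I' + I·B`, then `B/I'` is not flat as an `A/I`-module via the induced
ring homomorphism `A/I → B/I'`.
-/

set_option maxHeartbeats 1000000 in
set_option synthInstance.maxHeartbeats 400000 in
/-- **Lemma 5.2** (non-flatness criterion). -/
theorem not_flat_quotient_of_exists_mem
    (A : Type*) (B : Type*) [CommRing A] [CommRing B] (φ : A →+* B)
    (hB : letI : Module A B := Module.compHom B φ
      Module.Flat A B)
    (I M : Ideal A) (hIM : I ≤ M)
    (I' : Ideal B) (hII' : I.map φ ≤ I')
    (F : B) (hF : F ∈ I' ⊓ M.map φ)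
    (hF' : F ∉ M.map φ * I' + I.map φ) :
    ¬ (letI : Module (A ⧸ I) (B ⧸ I') :=
        Module.compHom _ (Ideal.quotientMap I' φ (Ideal.map_le_iff_le_comap.mp hII'))
      Module.Flat (A ⧸ I) (B ⧸ I')) := by
  letI instAB : Module (A ⧸ I) (B ⧸ I') :=
    Module.compHom _ (Ideal.quotientMap I' φ (Ideal.map_le_iff_le_comap.mp hII'))
  intro hflat
  replace hflat : Module.Flat (A ⧸ I) (B ⧸ I') := hflat
  classical
  set ρ : A ⧸ I →+* B ⧸ I' := Ideal.quotientMap I' φ (Ideal.map_le_iff_le_comap.mp hII')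
    with hρdef
  have hsmul : ∀ (r : A ⧸ I) (y : B ⧸ I'), r • y = ρ r * y := fun r y => rfl
  set J : Ideal B := M.map φ * I' + I.map φ with hJdef
  have hIJmap : I.map φ ≤ J := le_sup_right
  set ψ : A ⧸ I →+* B ⧸ J := Ideal.quotientMap J φ (Ideal.map_le_iff_le_comap.mp hIJmap)
    with hψdef
  have hψmk : ∀ a : A, ψ (Ideal.Quotient.mk I a) = Ideal.Quotient.mk J (φ a) := fun a =>
    Ideal.quotientMap_mk
  have hρmk : ∀ a : A, ρ (Ideal.Quotient.mk I a) = Ideal.Quotient.mk I' (φ a) := fun a =>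
    Ideal.quotientMap_mk
  set Mbar : Ideal (A ⧸ I) := M.map (Ideal.Quotient.mk I) with hMbar
  -- the additive map `f : Mbar →+ (B⧸I' →+ B⧸J)`, `f x (mk b) = ψ x * mk b`
  have hmksmul : ∀ (c b : B), c • (Ideal.Quotient.mk J b) = Ideal.Quotient.mk J (c * b) :=
    fun c b => rfl
  have hmksmul' : ∀ (c b : B), c • (Ideal.Quotient.mk I' b) = Ideal.Quotient.mk I' (c * b) :=
    fun c b => rfl
  have hsmulJ : ∀ (c : B) (z : B ⧸ J), c • z = Ideal.Quotient.mk J c * z := by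
    intro c z
    obtain ⟨b, rfl⟩ := Ideal.Quotient.mk_surjective z
    rw [hmksmul, map_mul]
  have gdef : ∀ x : Mbar, ∃ g : B ⧸ I' →+ B ⧸ J,
      ∀ b : B, g (Ideal.Quotient.mk I' b) = ψ (x : A ⧸ I) * Ideal.Quotient.mk J b := by
    intro x
    obtain ⟨m, hm, hmx⟩ := Ideal.mem_map_iff_of_surjective _ Ideal.Quotient.mk_surjective
      |>.mp x.2
    refine ⟨(Submodule.liftQ (I' : Submodule B B)
      (ψ (x : A ⧸ I) • Submodule.mkQ (J : Submodule B B)) ?_).toAddMonoidHom, fun b => rfl⟩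
    intro b hb
    simp only [LinearMap.mem_ker, LinearMap.smul_apply, Submodule.mkQ_apply]
    show ψ (x : A ⧸ I) * Ideal.Quotient.mk J b = 0
    rw [← hmx, hψmk, ← map_mul, Ideal.Quotient.eq_zero_iff_mem]
    exact Ideal.mem_sup_left (Ideal.mul_mem_mul (Ideal.mem_map_of_mem φ hm) hb)
  choose g hg using gdef
  have hgadd : ∀ x y : Mbar, g (x + y) = g x + g y := by
    intro x y
    ext z
    obtain ⟨b, rfl⟩ := Ideal.Quotient.mk_surjective z
    simp only [hg, AddMonoidHom.add_apply, Submodule.coe_add, map_add, add_mul]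
  have hgzero : g 0 = 0 := by
    ext z
    obtain ⟨b, rfl⟩ := Ideal.Quotient.mk_surjective z
    simp [hg]
  let f : Mbar →+ (B ⧸ I' →+ B ⧸ J) := ⟨⟨g, hgzero⟩, hgadd⟩
  have hbal : ∀ (r : A ⧸ I) (x : Mbar) (y : B ⧸ I'), f (r • x) y = f x (r • y) := by
    intro r x y
    obtain ⟨a, rfl⟩ := Ideal.Quotient.mk_surjective r
    obtain ⟨b, rfl⟩ := Ideal.Quotient.mk_surjective y
    show g _ _ = g _ _
    rw [hsmul, hρmk, ← map_mul, hg, hg]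
    have : ((Ideal.Quotient.mk I a • x : Mbar) : A ⧸ I)
        = Ideal.Quotient.mk I a * (x : A ⧸ I) := rfl
    rw [this, map_mul, hψmk, map_mul]
    ring
  let β : Mbar ⊗[A ⧸ I] (B ⧸ I') →+ B ⧸ J := TensorProduct.liftAddHom f hbal
  have hβ : ∀ (x : Mbar) (y : B ⧸ I'), β (x ⊗ₜ y) = f x y := fun x y =>
    TensorProduct.liftAddHom_tmul f hbal x y
  -- the map `μ : Mbar ⊗ B⧸I' →ₗ B⧸I'`
  let μ : Mbar ⊗[A ⧸ I] (B ⧸ I') →ₗ[A ⧸ I] B ⧸ I' :=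
    (TensorProduct.lid (A ⧸ I) (B ⧸ I')).toLinearMap ∘ₗ
      LinearMap.rTensor (B ⧸ I') Mbar.subtype
  have hμtmul : ∀ (x : Mbar) (y : B ⧸ I'), μ (x ⊗ₜ y) = (x : A ⧸ I) • y := by
    intro x y
    simp [μ]
  have hμinj : Function.Injective μ := by
    have h1 : Function.Injective (LinearMap.rTensor (B ⧸ I') Mbar.subtype) :=
      Module.Flat.iff_rTensor_injective'.mp hflat Mbar
    exact (TensorProduct.lid (A ⧸ I) (B ⧸ I')).injective.comp h1
  -- representation claim
  have hrep : ∀ x ∈ M.map φ, ∃ t : Mbar ⊗[A ⧸ I] (B ⧸ I'),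
      μ t = Ideal.Quotient.mk I' x ∧ β t = Ideal.Quotient.mk J x := by
    intro x hx
    have hx' : x ∈ Submodule.span B (φ '' (M : Set A)) := hx
    clear hx
    induction hx' using Submodule.span_induction with
    | mem y hy =>
      obtain ⟨m, hm, rfl⟩ := hy
      refine ⟨(⟨Ideal.Quotient.mk I m, Ideal.mem_map_of_mem _ hm⟩ : Mbar) ⊗ₜ 1, ?_, ?_⟩
      · rw [hμtmul, hsmul, hρmk, mul_one]
      · rw [hβ]
        show g _ _ = _
        have h1 : (1 : B ⧸ I') = Ideal.Quotient.mk I' 1 := rfl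
        rw [h1, hg, hψmk, ← map_mul, mul_one]
    | zero => exact ⟨0, by simp, by simp⟩
    | add y z hy hz ihy ihz =>
      obtain ⟨t₁, ht₁, ht₁'⟩ := ihy
      obtain ⟨t₂, ht₂, ht₂'⟩ := ihz
      exact ⟨t₁ + t₂, by rw [map_add, ht₁, ht₂, map_add],
        by rw [map_add, ht₁', ht₂', map_add]⟩
    | smul c y hy ihy =>
      obtain ⟨t, ht, ht'⟩ := ihy
      let mulc : B ⧸ I' →ₗ[A ⧸ I] B ⧸ I' :=
        { toFun := fun z => Ideal.Quotient.mk I' c * z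
          map_add' := fun z w => mul_add _ _ _
          map_smul' := fun r z => by
            simp only [RingHom.id_apply, hsmul]
            ring }
      refine ⟨LinearMap.lTensor Mbar mulc t, ?_, ?_⟩
      · have key : ∀ s : Mbar ⊗[A ⧸ I] (B ⧸ I'),
            μ (LinearMap.lTensor Mbar mulc s) = Ideal.Quotient.mk I' c * μ s := by
          intro s
          induction s using TensorProduct.induction_on with
          | zero => simp
          | tmul u v =>
            rw [LinearMap.lTensor_tmul, hμtmul, hμtmul, hsmul, hsmul]
            show ρ _ * (Ideal.Quotient.mk I' c * v) = _
            ring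
          | add s₁ s₂ ih₁ ih₂ => rw [map_add, map_add, map_add, ih₁, ih₂, mul_add]
        rw [key, ht]
        show _ = Ideal.Quotient.mk I' (c * y)
        rw [map_mul]
      · have key : ∀ s : Mbar ⊗[A ⧸ I] (B ⧸ I'),
            β (LinearMap.lTensor Mbar mulc s) = Ideal.Quotient.mk J c * β s := by
          intro s
          induction s using TensorProduct.induction_on with
          | zero => simp
          | tmul u v =>
            obtain ⟨b, rfl⟩ := Ideal.Quotient.mk_surjective v
            have hmc : mulc (Ideal.Quotient.mk I' b) = Ideal.Quotient.mk I' (c * b) := by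
              show Ideal.Quotient.mk I' c * Ideal.Quotient.mk I' b = _
              rw [← map_mul]
            rw [LinearMap.lTensor_tmul, hmc, hβ, hβ]
            show g u _ = _ * g u _
            rw [hg, hg, map_mul]
            ring
          | add s₁ s₂ ih₁ ih₂ => rw [map_add, map_add, map_add, ih₁, ih₂, mul_add]
        rw [key, ht']
        show _ = Ideal.Quotient.mk J (c * y)
        rw [map_mul]
  obtain ⟨hF1, hF2⟩ := Submodule.mem_inf.mp hF
  obtain ⟨t, h1, h2⟩ := hrep F hF2
  have hμ0 : μ t = 0 := by rw [h1, Ideal.Quotient.eq_zero_iff_mem]; exact hF1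
  have ht0 : t = 0 := hμinj (by rw [hμ0, map_zero])
  rw [ht0, map_zero] at h2
  exact hF' (Ideal.Quotient.eq_zero_iff_mem.mp h2.symm)
end
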